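/- arXiv:1107.5542 — 3 statements merged into one kernel-verified Lean document; each statement's English description precedes it below -/
import Mathlib

section
/- Let E be an n×n matrix of nonnegative integers with det E ≠ 0, and let E^T denote its transpose. Then the symmetry group G_{E^T} = {μ ∈ (ℂ*)^n : ∏_j μ_j^{E_{ji}} = 1 for all i} is isomorphic as a group to the character group Hom(G_E, ℂ*) of G_E = {λ ∈ (ℂ*)^n : ∏_j λ_j^{E_{ij}} = 1 for all i}. -/
open Finset

variable {n : ℕ}

/-- The diagonal symmetry group `G_E` of the invertible polynomial
`f(x) = ∑ i, ∏ j, x_j ^ E i j`, realized as the subgroup of `(ℂ*)^n` of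
diagonal transformations `λ` with `∏ j, λ_j ^ E i j = 1` for all `i`. -/
def symGroup (E : Matrix (Fin n) (Fin n) ℕ) : Subgroup (Fin n → ℂˣ) where
  carrier := {l | ∀ i, ∏ j, l j ^ E i j = 1}
  one_mem' := by intro i; simp
  mul_mem' := by
    intro a b ha hb i
    simp only [Pi.mul_apply, mul_pow, Finset.prod_mul_distrib, ha i, hb i, mul_one]
  inv_mem' := by
    intro a ha i
    simp only [Pi.inv_apply, inv_pow, Finset.prod_inv_distrib, ha i, inv_one]

/-!
The map `a ↦ (exp (2πi (E⁻¹ a)_j))_j` is a surjection `ℤⁿ → G_E` with kernel `E ℤⁿ`,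
so the characters of `G_E` are the characters of `ℤⁿ` that are trivial on `E ℤⁿ`.
A character of `ℤⁿ` is `a ↦ ∏ j, μ_j ^ a_j` for a unique `μ ∈ (ℂ*)ⁿ`, and it is trivial
on the columns of `E` exactly when `μ ∈ G_{Eᵀ}`.
-/

section ZPowProd

variable {ι G : Type*} [Fintype ι] [CommGroup G]

def prodZPowHom (g : ι → G) : Multiplicative (ι → ℤ) →* G where
  toFun a := ∏ j, g j ^ a.toAdd j
  map_one' := by simp
  map_mul' a b := by simp [zpow_add, prod_mul_distrib]

@[simp]
lemma prodZPowHom_apply (g : ι → G) (a : Multiplicative (ι → ℤ)) :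
    prodZPowHom g a = ∏ j, g j ^ a.toAdd j := rfl

lemma prodZPowHom_single [DecidableEq ι] (g : ι → G) (j : ι) :
    prodZPowHom g (.ofAdd (Pi.single j 1)) = g j := by
  rw [prodZPowHom_apply, prod_eq_single j] <;> simp_all

lemma MonoidHom.eq_prodZPowHom [DecidableEq ι] (f : Multiplicative (ι → ℤ) →* G) :
    f = prodZPowHom (fun j => f (.ofAdd (Pi.single j 1))) := by
  ext j
  simp

def prodZPowEquiv [DecidableEq ι] : (ι → G) ≃* (Multiplicative (ι → ℤ) →* G) where
  toFun := prodZPowHom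
  invFun f j := f (.ofAdd (Pi.single j 1))
  left_inv g := funext (prodZPowHom_single g)
  right_inv f := f.eq_prodZPowHom.symm
  map_mul' g h := by ext; simp [mul_zpow, prod_mul_distrib]

lemma prodZPowHom_mulVec (g : ι → G) (A : Matrix ι ι ℤ) (k : ι → ℤ) :
    prodZPowHom g (.ofAdd (A.mulVec k)) = ∏ i, (∏ j, g j ^ A j i) ^ k i := by
  have hcols : Multiplicative.ofAdd (A.mulVec k) = ∏ i, .ofAdd (fun j => A j i) ^ k i := by
    apply Multiplicative.toAdd.injective
    ext j
    simp [Matrix.mulVec, dotProduct, mul_comm]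
  simp [hcols, map_prod, map_zpow]

lemma prodZPowHom_mulVec_eq_one_iff [DecidableEq ι] (g : ι → G) (A : Matrix ι ι ℤ) :
    (∀ k, prodZPowHom g (.ofAdd (A.mulVec k)) = 1) ↔ ∀ i, ∏ j, g j ^ A j i = 1 := by
  refine ⟨fun h i => ?_, fun h k => by rw [prodZPowHom_mulVec]; simp [h]⟩
  simpa [Matrix.mulVec_single_one] using h (Pi.single i 1)

end ZPowProd

namespace MonoidHom

variable {G H M : Type*} [Group G] [Group H] [CommGroup M]

lemma injective_compHom' {f : G →* H} (hf : Function.Surjective f) :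
    Function.Injective (compHom' f : (H →* M) →* G →* M) :=
  fun _ _ h => (cancel_right hf).mp h

lemma mem_range_compHom'_iff {f : G →* H} (hf : Function.Surjective f) {g : G →* M} :
    g ∈ (compHom' f : (H →* M) →* G →* M).range ↔ f.ker ≤ g.ker := by
  constructor
  · rintro ⟨χ, rfl⟩ x hx
    simp_all [mem_ker]
  · intro h
    exact ⟨liftOfSurjective f hf ⟨g, h⟩,
      liftOfRightInverse_comp _ _ (Function.rightInverse_surjInv hf) _⟩

end MonoidHom

open Complex Matrix
open scoped Real

namespace Matrix

variable {ι : Type*} [Fintype ι]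

lemma nonsing_inv_mulVec_eq_iff [DecidableEq ι] {R : Type*} [CommRing R] {A : Matrix ι ι R}
    (hA : IsUnit A.det) {x y : ι → R} : A⁻¹ *ᵥ x = y ↔ x = A *ᵥ y := by
  constructor
  · rintro rfl
    rw [mulVec_mulVec, mul_nonsing_inv A hA, one_mulVec]
  · rintro rfl
    rw [mulVec_mulVec, nonsing_inv_mul A hA, one_mulVec]

lemma intCast_comp_map_natCast_mulVec (A : Matrix ι ι ℕ) (k : ι → ℤ) :
    (Int.cast ∘ (A.map (Nat.cast : ℕ → ℤ) *ᵥ k) : ι → ℂ) =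
      A.map (Nat.cast : ℕ → ℂ) *ᵥ (Int.cast ∘ k) := by
  ext
  simp [mulVec, dotProduct]

lemma isUnit_det_map_natCast_complex [DecidableEq ι] {A : Matrix ι ι ℕ}
    (hA : (A.map (Nat.cast : ℕ → ℤ)).det ≠ 0) : IsUnit (A.map (Nat.cast : ℕ → ℂ)).det := by
  have hmap : A.map (Nat.cast : ℕ → ℂ) = (Int.castRingHom ℂ).mapMatrix (A.map Nat.cast) := by
    ext; simp
  rw [hmap, ← RingHom.map_det, isUnit_iff_ne_zero]
  simpa using hA

end Matrix

section ExpVec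

variable {ι : Type*}

noncomputable def expVec (θ : ι → ℂ) : ι → ℂˣ :=
  fun j => Units.mk0 (exp (2 * π * I * θ j)) (exp_ne_zero _)

@[simp]
lemma expVec_zero : expVec (0 : ι → ℂ) = 1 := by
  ext
  simp [expVec]

lemma expVec_add (θ φ : ι → ℂ) : expVec (θ + φ) = expVec θ * expVec φ := by
  ext j
  simp [expVec, mul_add, Complex.exp_add]

lemma exp_two_pi_I_mul_eq_one_iff {z : ℂ} : exp (2 * π * I * z) = 1 ↔ ∃ m : ℤ, z = m := by
  rw [Complex.exp_eq_one_iff]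
  refine exists_congr fun m => ?_
  rw [mul_comm (m : ℂ), mul_right_inj' two_pi_I_ne_zero]

lemma expVec_eq_one_iff {θ : ι → ℂ} : expVec θ = 1 ↔ ∃ k : ι → ℤ, θ = Int.cast ∘ k := by
  simp only [funext_iff, Pi.one_apply, Units.ext_iff, expVec, Units.val_mk0, Units.val_one,
    exp_two_pi_I_mul_eq_one_iff, Function.comp_apply]
  exact Classical.skolem

lemma expVec_surjective : Function.Surjective (expVec : (ι → ℂ) → ι → ℂˣ) := by
  intro l
  refine ⟨fun j => log (l j) / (2 * π * I), funext fun j => Units.ext ?_⟩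
  simp [expVec, mul_div_cancel₀ _ two_pi_I_ne_zero, exp_log (l j).ne_zero]

lemma prod_expVec_pow [Fintype ι] (A : Matrix ι ι ℕ) (θ : ι → ℂ) (i : ι) :
    ∏ j, expVec θ j ^ A i j = expVec (A.map (Nat.cast : ℕ → ℂ) *ᵥ θ) i := by
  apply Units.ext
  simp [expVec, ← exp_nat_mul, ← exp_sum, mulVec, dotProduct, mul_sum]
  exact congrArg cexp (sum_congr rfl fun j _ => by ring)

end ExpVec

namespace symGroup

variable (E : Matrix (Fin n) (Fin n) ℕ)

lemma mem_iff {l : Fin n → ℂˣ} : l ∈ symGroup E ↔ ∀ i, ∏ j, l j ^ E i j = 1 := Iff.rfl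

lemma expVec_mem_iff {θ : Fin n → ℂ} :
    expVec θ ∈ symGroup E ↔ ∃ a : Fin n → ℤ, E.map (Nat.cast : ℕ → ℂ) *ᵥ θ = Int.cast ∘ a := by
  rw [mem_iff, ← expVec_eq_one_iff, funext_iff]
  simp only [Pi.one_apply, ← prod_expVec_pow]

noncomputable def expParam : Multiplicative (Fin n → ℤ) →* (Fin n → ℂˣ) where
  toFun a := expVec ((E.map (Nat.cast : ℕ → ℂ))⁻¹ *ᵥ (Int.cast ∘ a.toAdd))
  map_one' := by simp
  map_mul' a b := by
    rw [← expVec_add, ← mulVec_add]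
    congr 2
    ext
    simp

variable {E}

lemma expParam_mem (hE : IsUnit (E.map (Nat.cast : ℕ → ℂ)).det)
    (a : Multiplicative (Fin n → ℤ)) : expParam E a ∈ symGroup E :=
  (expVec_mem_iff E).mpr ⟨a.toAdd, by rw [mulVec_mulVec, mul_nonsing_inv _ hE, one_mulVec]⟩

lemma expParam_eq_one_iff (hE : IsUnit (E.map (Nat.cast : ℕ → ℂ)).det)
    {a : Multiplicative (Fin n → ℤ)} :
    expParam E a = 1 ↔ ∃ k, a.toAdd = E.map (Nat.cast : ℕ → ℤ) *ᵥ k := by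
  simp only [expParam, MonoidHom.coe_mk, OneHom.coe_mk, expVec_eq_one_iff,
    nonsing_inv_mulVec_eq_iff hE, ← intCast_comp_map_natCast_mulVec]
  exact exists_congr fun k => Int.cast_injective.comp_left.eq_iff

lemma exists_expParam_eq (hE : IsUnit (E.map (Nat.cast : ℕ → ℂ)).det) {l : Fin n → ℂˣ}
    (hl : l ∈ symGroup E) : ∃ a, expParam E a = l := by
  obtain ⟨θ, rfl⟩ := expVec_surjective l
  obtain ⟨a, ha⟩ := (expVec_mem_iff E).mp hl
  exact ⟨.ofAdd a, congrArg expVec ((nonsing_inv_mulVec_eq_iff hE).mpr ha.symm)⟩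

variable (hE : IsUnit (E.map (Nat.cast : ℕ → ℂ)).det)

noncomputable def param : Multiplicative (Fin n → ℤ) →* symGroup E :=
  (expParam E).codRestrict _ (expParam_mem hE)

lemma param_surjective : Function.Surjective (param hE) := fun l =>
  (exists_expParam_eq hE l.2).imp fun _ ha => Subtype.ext ha

lemma mem_ker_param_iff {a : Multiplicative (Fin n → ℤ)} :
    a ∈ (param hE).ker ↔ ∃ k, a.toAdd = E.map (Nat.cast : ℕ → ℤ) *ᵥ k := by
  rw [param, MonoidHom.ker_codRestrict, MonoidHom.mem_ker, expParam_eq_one_iff hE]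

lemma mem_transpose_iff_ker_le {μ : Fin n → ℂˣ} :
    μ ∈ symGroup Eᵀ ↔ (param hE).ker ≤ (prodZPowHom μ).ker := by
  have hlattice : (param hE).ker ≤ (prodZPowHom μ).ker ↔
      ∀ k, prodZPowHom μ (.ofAdd (E.map (Nat.cast : ℕ → ℤ) *ᵥ k)) = 1 := by
    simp only [SetLike.le_def, mem_ker_param_iff hE, MonoidHom.mem_ker]
    exact ⟨fun h k => h ⟨k, rfl⟩, fun h x ⟨k, hk⟩ => by rw [← ofAdd_toAdd x, hk]; exact h k⟩
  rw [hlattice, prodZPowHom_mulVec_eq_one_iff, mem_iff]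
  simp

end symGroup

open Matrix in
/-- The symmetry group `G_{E^T}` of the Berglund–Hübsch transpose is isomorphic to the
group of characters `Hom(G_E, ℂ*)` of `G_E`. -/
theorem symGroup_transpose_iso_characters (E : Matrix (Fin n) (Fin n) ℕ)
    (hdet : (E.map (Nat.cast : ℕ → ℤ)).det ≠ 0) :
    Nonempty (symGroup Eᵀ ≃* ((symGroup E) →* ℂˣ)) := by
  have hE := isUnit_det_map_natCast_complex hdet
  have hu := symGroup.param_surjective hE
  have hrange : (symGroup Eᵀ).map (prodZPowEquiv : (Fin n → ℂˣ) ≃* _).toMonoidHom =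
      (MonoidHom.compHom' (symGroup.param hE)).range := by
    ext f
    rw [Subgroup.mem_map_equiv, MonoidHom.mem_range_compHom'_iff hu,
      symGroup.mem_transpose_iff_ker_le hE,
      show prodZPowHom (prodZPowEquiv.symm f) = f from prodZPowEquiv.apply_symm_apply f]
  exact ⟨(prodZPowEquiv.subgroupMap _).trans ((MulEquiv.subgroupCongr hrange).trans
    (MonoidHom.ofInjective (MonoidHom.injective_compHom' hu)).symm)⟩
end

section
/- Let E be an n×n matrix of nonnegative integers with det E ≠ 0, let I ⊆ {1,…,n}, and let A = A(I) = {i : E_{ij} = 0 for all j ∉ I} be the set of rows of E supported in the columns I. Suppose |A| = |I|. Then the set {j : E_{ij} = 0 for all i ∈ A} of columns of E vanishing on the rows in A is exactly the complement Iᶜ of I. Consequently, for the transpose matrix E^T, the set Aᶜ ⊆ {1,…,n} satisfies {i : (E^T)_{ij} = 0 for all j ∉ Aᶜ} = Iᶜ, so |{i : (E^T)_{ij} = 0 for all j ∉ Aᶜ}| = |Aᶜ|; i.e. if I is a good index set for E with row set A, then Aᶜ is a good index set for E^T with row set Iᶜ. -/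
/-! The rows of `E` are linearly independent over `ℤ` since `det E ≠ 0`. If a column `j ∈ I`
vanished on all rows of `A(I)`, these `|A(I)| = |I|` independent rows would be supported in
the `|I| - 1` columns `I \ {j}`, which is impossible. -/

open Finset

variable {n : ℕ}

/-- For a subset `I ⊆ {1,…,n}` of columns, `rowSet E I = A(I)` is the set of rows of `E`
supported in the columns `I`, i.e. `{i : E i j = 0 for all j ∉ I}`. -/
def rowSet (E : Matrix (Fin n) (Fin n) ℕ) (I : Finset (Fin n)) : Finset (Fin n) :=
  @Finset.filter _ (fun i => ∀ j, j ∉ I → E i j = 0) (fun _ => Fintype.decidableForallFintype)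
    Finset.univ

theorem mem_rowSet {E : Matrix (Fin n) (Fin n) ℕ} {I : Finset (Fin n)} {i : Fin n} :
    i ∈ rowSet E I ↔ ∀ j ∉ I, E i j = 0 := by
  simp [rowSet]

theorem LinearIndependent.card_le_card_of_forall_eq_zero {R ι κ : Type*} [Ring R]
    [StrongRankCondition R] [Fintype ι] {v : ι → κ → R} (hv : LinearIndependent R v)
    {J : Finset κ} (hsupp : ∀ i, ∀ j ∉ J, v i j = 0) : Fintype.card ι ≤ J.card := by
  have hres : LinearIndependent R fun i (j : J) ↦ v i j := by
    rw [Fintype.linearIndependent_iff] at hv ⊢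
    refine fun g hg ↦ hv g (funext fun j ↦ ?_)
    by_cases hj : j ∈ J
    · simpa using congrFun hg ⟨j, hj⟩
    · simp [hsupp _ j hj]
  simpa using hres.fintype_card_le_finrank

theorem card_rowSet_le_of_forall_eq_zero (E : Matrix (Fin n) (Fin n) ℕ)
    (hdet : (E.map (Nat.cast : ℕ → ℤ)).det ≠ 0) {I J : Finset (Fin n)}
    (hsupp : ∀ i ∈ rowSet E I, ∀ j ∉ J, E i j = 0) : (rowSet E I).card ≤ J.card := by
  have hrows := (Matrix.linearIndependent_rows_of_det_ne_zero hdet).comp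
    (Subtype.val : rowSet E I → Fin n) Subtype.val_injective
  simpa using hrows.card_le_card_of_forall_eq_zero fun i j hj ↦ by
    simp [hsupp i i.2 j hj]

theorem filter_forall_mem_rowSet_eq_zero_eq_compl (E : Matrix (Fin n) (Fin n) ℕ)
    (hdet : (E.map (Nat.cast : ℕ → ℤ)).det ≠ 0) {I : Finset (Fin n)}
    (hgood : (rowSet E I).card = I.card) :
    (univ.filter fun j ↦ ∀ i ∈ rowSet E I, E i j = 0) = Iᶜ := by
  ext j
  simp only [mem_filter, mem_univ, true_and, mem_compl]
  refine ⟨fun hj hjI ↦ ?_, fun hj i hi ↦ mem_rowSet.1 hi j hj⟩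
  have hle := card_rowSet_le_of_forall_eq_zero E hdet (J := I.erase j) fun i hi k hk ↦ by
    by_cases hkj : k = j
    · exact hkj ▸ hj i hi
    · exact mem_rowSet.1 hi k fun hkI ↦ hk (mem_erase.2 ⟨hkj, hkI⟩)
  rw [card_erase_of_mem hjI, hgood] at hle
  have := card_pos.2 ⟨j, hjI⟩
  omega

open Matrix in
theorem rowSet_transpose_compl (E : Matrix (Fin n) (Fin n) ℕ) (A : Finset (Fin n)) :
    rowSet Eᵀ Aᶜ = univ.filter fun j ↦ ∀ i ∈ A, E i j = 0 := by
  ext j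
  simp [rowSet]

open Matrix in
/-- If `I` is a good index set for `E` (i.e. `|A(I)| = |I|` where `A = A(I)` is the set
of rows supported in the columns `I`), then the set of columns of `E` vanishing on the
rows in `A` is exactly `Iᶜ`; consequently `Aᶜ` is a good index set for `E^T` with row
set `Iᶜ`. -/
theorem rowSet_compl_transpose (E : Matrix (Fin n) (Fin n) ℕ)
    (hdet : (E.map (Nat.cast : ℕ → ℤ)).det ≠ 0)
    (I : Finset (Fin n)) (hgood : (rowSet E I).card = I.card) :
    (Finset.univ.filter fun j => ∀ i ∈ rowSet E I, E i j = 0) = Iᶜ ∧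
    rowSet Eᵀ ((rowSet E I)ᶜ) = Iᶜ ∧
    (rowSet Eᵀ ((rowSet E I)ᶜ)).card = ((rowSet E I)ᶜ).card := by
  have hcols := filter_forall_mem_rowSet_eq_zero_eq_compl E hdet hgood
  have hrows : rowSet Eᵀ (rowSet E I)ᶜ = Iᶜ := (rowSet_transpose_compl E _).trans hcols
  refine ⟨hcols, hrows, ?_⟩
  rw [hrows, card_compl, card_compl, hgood]
end

section
/- Let E be an n×n matrix of nonnegative integers with det E ≠ 0, let I ⊆ {1,…,n}, let A = {i : E_{ij} = 0 for all j ∉ I}, and suppose |A| = |I|. Let G_E^I = {λ ∈ G_E : λ_j = 1 for all j ∈ I} and let G_{E^T}^{Aᶜ} = {μ ∈ G_{E^T} : μ_j = 1 for all j ∉ A}, where G_E = {λ ∈ (ℂ*)^n : ∏_j λ_j^{E_{ij}} = 1 for all i} and G_{E^T} = {μ ∈ (ℂ*)^n : ∏_j μ_j^{E_{ji}} = 1 for all i}. Then |G_E^I| · |G_{E^T}^{Aᶜ}| = |det E|. -/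
/-!
Inside the subtorus `(ℂ*)^{Iᶜ}`, the group `G_E^I` is cut out by the rows of `E` outside
`A = A(I)`, i.e. it is the kernel of the monomial map with exponent block `D = E[Aᶜ, Iᶜ]`;
dually `G_{Eᵀ}^{Aᶜ}` is the kernel of the monomial map on `(ℂ*)^A` with exponent block
`E[A, I]ᵀ`. A point of the torus `(ℂ*)^k` is a character of `ℤ^k`, and it lies in the kernel
of the monomial map with exponent matrix `M` iff it kills the rows of `M`; so that kernel is
the character group of `ℤ^k ⧸ (rows of M)`, of order `|det M|`. Finally `E` vanishes on
`A × Iᶜ` and `|A| = |I|`, so `E` is block triangular and `|det E| = |det E[A, I]| * |det D|`.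
-/

open Finset

variable {n : ℕ}

/-- The subgroup of `(ℂ*)^n` of elements `λ` with `λ_j = 1` for all `j ∈ I`. -/
def fixedSub (I : Finset (Fin n)) : Subgroup (Fin n → ℂˣ) where
  carrier := {l | ∀ j ∈ I, l j = 1}
  one_mem' := by intro j hj; rfl
  mul_mem' := by intro a b ha hb j hj; simp [Pi.mul_apply, ha j hj, hb j hj]
  inv_mem' := by intro a ha j hj; simp [Pi.inv_apply, ha j hj]

/-- The isotropy subgroup `G_E^I = {λ ∈ G_E : λ_j = 1 for all j ∈ I}` of the points of
the coordinate torus `(ℂ*)^{Iᶜ}` under the diagonal `G_E`-action. -/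
def isotropy (E : Matrix (Fin n) (Fin n) ℕ) (I : Finset (Fin n)) :
    Subgroup (Fin n → ℂˣ) :=
  symGroup E ⊓ fixedSub I

def Submodule.liftQEquiv {R M P : Type*} [Ring R] [AddCommGroup M] [Module R M] [AddCommGroup P]
    [Module R P] (N : Submodule R M) :
    {f : M →ₗ[R] P // N ≤ LinearMap.ker f} ≃ (M ⧸ N →ₗ[R] P) where
  toFun f := N.liftQ f f.2
  invFun g := ⟨g ∘ₗ N.mkQ, fun x hx => by simp [(Submodule.Quotient.mk_eq_zero N).2 hx]⟩
  left_inv f := Subtype.ext (N.liftQ_mkQ f.1 f.2)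
  right_inv g := Submodule.linearMap_qext N (N.liftQ_mkQ _ _)

theorem card_intLinearMap_additive_complexUnits (Q : Type*) [AddCommGroup Q] [Finite Q] :
    Nat.card (Q →ₗ[ℤ] Additive ℂˣ) = Nat.card Q := by
  have : NeZero (Monoid.exponent (Multiplicative Q) : ℂ) :=
    ⟨Nat.cast_ne_zero.2 Monoid.exponent_ne_zero_of_finite⟩
  rw [← Nat.card_congr (addMonoidHomLequivInt ℤ).toEquiv,
    Nat.card_congr AddMonoidHom.toMultiplicativeLeft,
    CommGroup.card_monoidHom_of_hasEnoughRootsOfUnity]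
  rfl

namespace Matrix

section TorusKer

variable {ι κ : Type*} [Fintype ι]

def torusKer (M : Matrix κ ι ℤ) : Subgroup (ι → ℂˣ) where
  carrier := {l | ∀ k, ∏ j, l j ^ M k j = 1}
  one_mem' k := by simp
  mul_mem' {a b} ha hb k := by
    simp only [Pi.mul_apply, mul_zpow, prod_mul_distrib, ha k, hb k, mul_one]
  inv_mem' {a} ha k := by
    simp only [Pi.inv_apply, _root_.inv_zpow, prod_inv_distrib, ha k, inv_one]

theorem mem_torusKer {M : Matrix κ ι ℤ} {l : ι → ℂˣ} :
    l ∈ M.torusKer ↔ ∀ k, ∏ j, l j ^ M k j = 1 :=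
  Iff.rfl

theorem torusKer_submatrix_left {κ' : Type*} (M : Matrix κ ι ℤ) (e : κ' ≃ κ) :
    (M.submatrix e id).torusKer = M.torusKer := by
  ext l
  simp only [mem_torusKer, submatrix_apply, id]
  exact ⟨fun h k => by simpa using h (e.symm k), fun h k => h (e k)⟩

variable [DecidableEq ι]

def torusEquivLinearMap : (ι → ℂˣ) ≃ ((ι → ℤ) →ₗ[ℤ] Additive ℂˣ) :=
  (Equiv.piCongrRight fun _ => Additive.ofMul).trans
    (LinearEquiv.piRing ℤ (Additive ℂˣ) ι ℤ).symm.toEquiv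

theorem torusEquivLinearMap_apply (l : ι → ℂˣ) (v : ι → ℤ) :
    torusEquivLinearMap l v = Additive.ofMul (∏ j, l j ^ v j) := by
  simp [torusEquivLinearMap, ofMul_prod, ofMul_zpow]

theorem mem_torusKer_iff_span_le_ker (M : Matrix κ ι ℤ) (l : ι → ℂˣ) :
    l ∈ M.torusKer ↔
      Submodule.span ℤ (Set.range M) ≤ LinearMap.ker (torusEquivLinearMap l) := by
  rw [Submodule.span_le]
  simp only [Set.subset_def, SetLike.mem_coe, LinearMap.mem_ker, torusEquivLinearMap_apply,
    ofMul_eq_zero, mem_torusKer]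
  exact ⟨fun h _ ⟨k, hk⟩ => hk ▸ h k, fun h k => h _ ⟨k, rfl⟩⟩

def torusKerEquiv (M : Matrix κ ι ℤ) :
    M.torusKer ≃ ((ι → ℤ) ⧸ Submodule.span ℤ (Set.range M) →ₗ[ℤ] Additive ℂˣ) :=
  (torusEquivLinearMap.subtypeEquiv (mem_torusKer_iff_span_le_ker M)).trans
    (Submodule.liftQEquiv _)

theorem card_quotient_span_rows (M : Matrix ι ι ℤ) (h : M.det ≠ 0) :
    Nat.card ((ι → ℤ) ⧸ Submodule.span ℤ (Set.range M)) = M.det.natAbs := by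
  have hli := linearIndependent_rows_of_det_ne_zero h
  have hrows : Subtype.val ∘ Module.Basis.span hli = M := funext fun i => by simp
  rw [← Submodule.natAbs_det_basis_change (Pi.basisFun ℤ ι) _ (Module.Basis.span hli), hrows]
  exact congrArg Int.natAbs (Pi.basisFun_det_apply _)

theorem card_torusKer_of_det_ne_zero (M : Matrix ι ι ℤ) (h : M.det ≠ 0) :
    Nat.card M.torusKer = M.det.natAbs := by
  have hQ := card_quotient_span_rows M h
  have : Finite ((ι → ℤ) ⧸ Submodule.span ℤ (Set.range M)) :=
    Nat.finite_of_card_ne_zero (by rw [hQ]; exact Int.natAbs_ne_zero.2 h)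
  rw [Nat.card_congr (torusKerEquiv M), card_intLinearMap_additive_complexUnits, hQ]

theorem card_torusKer_of_equiv (M : Matrix κ ι ℤ) (e : ι ≃ κ)
    (h : (M.submatrix e id).det ≠ 0) :
    Nat.card M.torusKer = (M.submatrix e id).det.natAbs := by
  rw [← torusKer_submatrix_left M e, card_torusKer_of_det_ne_zero _ h]

end TorusKer

section Determinant

variable {ι κ : Type*} [Fintype ι] [DecidableEq ι]

theorem natAbs_det_submatrix_equiv [Fintype κ] [DecidableEq κ] (e₁ e₂ : κ ≃ ι)
    (M : Matrix ι ι ℤ) : (M.submatrix e₁ e₂).det.natAbs = M.det.natAbs := by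
  have : M.submatrix e₁ e₂ =
      (M.submatrix id (e₁.symm.trans e₂ : Equiv.Perm ι)).submatrix e₁ e₁ := by
    ext; simp
  rw [this, det_submatrix_equiv_self, det_permute']
  simp [Int.natAbs_mul]

theorem natAbs_det_eq_mul_of_eq_zero (M : Matrix ι ι ℤ) (R C : Finset ι)
    (h0 : ∀ i ∈ R, ∀ j ∉ C, M i j = 0) (e₁ : R ≃ C) (e₂ : ↥Cᶜ ≃ ↥Rᶜ) :
    M.det.natAbs = (M.submatrix (↑) ((↑) ∘ e₁)).det.natAbs *
      (M.submatrix ((↑) ∘ e₂) (↑)).det.natAbs := by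
  let sumCompl (S : Finset ι) : S ⊕ ↥Sᶜ ≃ ι :=
    (Equiv.sumCongr (Equiv.refl _) (Equiv.subtypeEquivRight fun _ => Finset.mem_compl)).trans
      (Equiv.sumCompl (· ∈ S))
  let rows := (Equiv.sumCongr (Equiv.refl _) e₂).trans (sumCompl R)
  let cols := (Equiv.sumCongr e₁ (Equiv.refl _)).trans (sumCompl C)
  have hblocks : M.submatrix rows cols = fromBlocks
      (M.submatrix (↑) ((↑) ∘ e₁)) 0 (M.submatrix ((↑) ∘ e₂) ((↑) ∘ e₁))
      (M.submatrix ((↑) ∘ e₂) (↑)) := by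
    ext (i | i) (j | j)
    · rfl
    · exact h0 _ i.2 _ (Finset.mem_compl.1 j.2)
    · rfl
    · rfl
  rw [← natAbs_det_submatrix_equiv rows cols, hblocks, det_fromBlocks_zero₁₂, Int.natAbs_mul]

end Determinant

end Matrix

theorem Subgroup.card_eq_of_mem_iff_restrict {G ι : Type*} [Group G] {c : ι → Prop}
    [DecidablePred c] {H : Subgroup (ι → G)} {K : Subgroup ({j // c j} → G)}
    (hH : ∀ l ∈ H, ∀ j, ¬ c j → l j = 1)
    (hHK : ∀ l : ι → G, (∀ j, ¬ c j → l j = 1) →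
      (l ∈ H ↔ (fun j : {j // c j} => l j) ∈ K)) :
    Nat.card H = Nat.card K := by
  let extend (μ : {j // c j} → G) (j : ι) : G := if h : c j then μ ⟨j, h⟩ else 1
  have restrict_extend (μ : {j // c j} → G) : (fun j : {j // c j} => extend μ j) = μ :=
    funext fun j => dif_pos j.2
  refine Nat.card_congr
    { toFun l := ⟨fun j => l.1 j, (hHK l.1 (hH l.1 l.2)).1 l.2⟩
      invFun μ := ⟨extend μ.1,
        (hHK _ fun j hj => dif_neg hj).2 (by rw [restrict_extend]; exact μ.2)⟩
      left_inv l := Subtype.ext <| funext fun j => ?_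
      right_inv μ := Subtype.ext (restrict_extend μ.1) }
  by_cases hj : c j
  · exact dif_pos hj
  · exact (dif_neg hj).trans (hH l.1 l.2 j hj).symm

theorem mem_isotropy_iff_restrict (F : Matrix (Fin n) (Fin n) ℕ) {J R C : Finset (Fin n)}
    (hJC : IsCompl J C) (hR : ∀ i ∉ R, ∀ j ∈ C, F i j = 0) {l : Fin n → ℂˣ}
    (hl : ∀ j ∉ C, l j = 1) :
    l ∈ isotropy F J ↔ (fun j : C => l j) ∈
      ((F.map (Nat.cast : ℕ → ℤ)).submatrix ((↑) : R → Fin n) (↑)).torusKer := by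
  obtain rfl := hJC.compl_eq
  have hprod (i) : ∏ j, l j ^ F i j = ∏ j : ↥Jᶜ, l j ^ (F i j : ℤ) := by
    rw [← Finset.prod_subset (Jᶜ).subset_univ fun j _ hj => by rw [hl j hj, one_pow],
      ← Finset.prod_coe_sort]
    simp only [zpow_natCast]
  have hfixed : ∀ j ∈ J, l j = 1 := fun j hj => hl j (by simpa using hj)
  refine ⟨fun h ⟨i, _⟩ => (hprod i).symm.trans (h.1 i), fun h => ⟨fun i => ?_, hfixed⟩⟩
  by_cases hi : i ∈ R
  · exact (hprod i).trans (h ⟨i, hi⟩)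
  · rw [hprod i]
    exact Fintype.prod_eq_one _ fun j => by rw [hR i hi j j.2, Nat.cast_zero, zpow_zero]

theorem card_isotropy_eq_card_torusKer (F : Matrix (Fin n) (Fin n) ℕ) {J : Finset (Fin n)}
    (R C : Finset (Fin n)) (hJC : IsCompl J C) (hR : ∀ i ∉ R, ∀ j ∈ C, F i j = 0) :
    Nat.card (isotropy F J) = Nat.card
      ((F.map (Nat.cast : ℕ → ℤ)).submatrix ((↑) : R → Fin n) ((↑) : C → Fin n)).torusKer :=
  Subgroup.card_eq_of_mem_iff_restrict (c := (· ∈ C))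
    (fun l hl j hj => hl.2 j (by rwa [← hJC.compl_eq, Finset.mem_compl, not_not] at hj))
    (fun _ hl => mem_isotropy_iff_restrict F hJC hR hl)

open Matrix in
/-- If `I` is good for `E` (with row set `A = rowSet E I`, `|A| = |I|`), then the orders
of the isotropy subgroups `G_E^I` and `G_{E^T}^{Aᶜ}` multiply up to `|det E|`. -/
theorem card_isotropy_mul_card_isotropy_transpose (E : Matrix (Fin n) (Fin n) ℕ)
    (hdet : (E.map (Nat.cast : ℕ → ℤ)).det ≠ 0)
    (I : Finset (Fin n)) (hgood : (rowSet E I).card = I.card) :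
    Nat.card (isotropy E I) * Nat.card (isotropy Eᵀ ((rowSet E I)ᶜ)) =
      (E.map (Nat.cast : ℕ → ℤ)).det.natAbs := by
  set A := rowSet E I
  have hA : ∀ i ∈ A, ∀ j ∉ I, E i j = 0 := fun i hi => by simpa [A, rowSet] using hi
  obtain ⟨e₁⟩ : Nonempty (A ≃ I) := Fintype.card_eq.1 (by simp [hgood])
  obtain ⟨e₂⟩ : Nonempty (↥Iᶜ ≃ ↥Aᶜ) := Fintype.card_eq.1 (by simp [hgood])
  have hblocks := (E.map (Nat.cast : ℕ → ℤ)).natAbs_det_eq_mul_of_eq_zero A I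
    (fun i hi j hj => by simp [hA i hi j hj]) e₁ e₂
  have hne := Int.natAbs_ne_zero.2 hdet
  rw [hblocks, mul_ne_zero_iff, Int.natAbs_ne_zero, Int.natAbs_ne_zero] at hne
  rw [card_isotropy_eq_card_torusKer E Aᶜ Iᶜ isCompl_compl
      (fun i hi j hj => hA i (by simpa using hi) j (by simpa using hj)),
    card_isotropy_eq_card_torusKer Eᵀ I A isCompl_compl.symm (fun i hi j hj => hA j hj i hi),
    card_torusKer_of_equiv _ e₂, card_torusKer_of_equiv _ e₁, hblocks]
  all_goals simp only [submatrix_submatrix, Function.comp_id, transpose_map,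
    ← transpose_submatrix, det_transpose]
  exacts [mul_comm _ _, hne.1, hne.2]
end
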